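/- For every Borel set E ⊆ [0, a₁) one has λ(E) ≤ μ(E) ≤ c₂·λ(E), where c₂ = 1 + Σ_{n=1}^∞ κ(n)/βⁿ (a finite constant). -/

import Mathlib

open MeasureTheory Set

/-- The greedy β-transformation with deleted digit set `{0, a₁, a₂}`:
`T x = βx` on `Δ(0) = [0, a₁/β)`, `T x = βx − a₁` on `Δ(a₁) = [a₁/β, a₂/β)`,
and `T x = βx − a₂` on `Δ(a₂) = [a₂/β, a₁)`. -/
noncomputable def greedyT (β a₁ a₂ : ℝ) (x : ℝ) : ℝ :=
  if x < a₁ / β then β * x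
  else if x < a₂ / β then β * x - a₁
  else β * x - a₂

/-- The interval `Δ(b)` associated to a digit `b ∈ {0, a₁, a₂}`. -/
noncomputable def digitInt (β a₁ a₂ : ℝ) (b : ℝ) : Set ℝ :=
  if b = 0 then Set.Ico 0 (a₁ / β)
  else if b = a₁ then Set.Ico (a₁ / β) (a₂ / β)
  else Set.Ico (a₂ / β) a₁

/-- The fundamental interval `Δ(w) = ⋂_{k < n} T⁻ᵏ Δ(b_k)` of a word
`w = (b₀, …, b_{n−1})`. -/
noncomputable def cyl (β a₁ a₂ : ℝ) (w : List ℝ) : Set ℝ :=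
  ⋂ k ∈ Finset.range w.length,
    (greedyT β a₁ a₂)^[k] ⁻¹' digitInt β a₁ a₂ (w.getD k 0)

/-- `w` is a word over the alphabet `A = {0, a₁, a₂}`. -/
def isWord (a₁ a₂ : ℝ) (w : List ℝ) : Prop := ∀ b ∈ w, b = 0 ∨ b = a₁ ∨ b = a₂

/-- The fundamental interval `Δ(w)` is full: `λ(Δ(w)) = a₁/β^|w|`. -/
def isFull (β a₁ a₂ : ℝ) (w : List ℝ) : Prop :=
  volume (cyl β a₁ a₂ w) = ENNReal.ofReal (a₁ / β ^ w.length)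

/-- Condition (6): `a₁ · max (β−1) 1 < a₂ < a₁ · min 2 β`. -/
def condition6 (β a₁ a₂ : ℝ) : Prop :=
  a₁ * max (β - 1) 1 < a₂ ∧ a₂ < a₁ * min 2 β

/-- `w ∈ Bₙ`: `w` is a word of length `n` over `A` with `λ(Δ(w)) > 0`, `Δ(w)`
non-full, and `Δ(w′)` non-full for every nonempty proper prefix `w′` of `w`. -/
def memB (β a₁ a₂ : ℝ) (n : ℕ) (w : List ℝ) : Prop :=
  w.length = n ∧ isWord a₁ a₂ w ∧ 0 < volume (cyl β a₁ a₂ w) ∧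
    ¬ isFull β a₁ a₂ w ∧
    ∀ w' : List ℝ, w' ≠ [] → w' <+: w → w' ≠ w → ¬ isFull β a₁ a₂ w'

/-- `κ(n)`: the number of elements of `Bₙ`. -/
noncomputable def kappa (β a₁ a₂ : ℝ) (n : ℕ) : ℕ :=
  {w : List ℝ | memB β a₁ a₂ n w}.ncard

/-- The density `φ = 1 + Σ_{n≥1} Σ_{w ∈ Bₙ} β^(−n)·1_{TⁿΔ(w)}`. -/
noncomputable def phi (β a₁ a₂ : ℝ) (x : ℝ) : ℝ :=
  1 + ∑' n : ℕ, ∑' w : {w : List ℝ // memB β a₁ a₂ (n + 1) w},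
    Set.indicator ((greedyT β a₁ a₂)^[n + 1] '' cyl β a₁ a₂ w.1)
      (fun _ => (β ^ (n + 1))⁻¹) x

/-- The measure `μ` on `[0, a₁)` with density `φ` with respect to Lebesgue
measure: `μ(E) = ∫_E φ dλ` for Borel `E ⊆ [0, a₁)`. -/
noncomputable def muMeas (β a₁ a₂ : ℝ) : Measure ℝ :=
  (volume.restrict (Set.Ico 0 a₁)).withDensity
    fun x => ENNReal.ofReal (phi β a₁ a₂ x)


/-!
Trivially `φ ≥ 1`, and `φ ≤ 1 + ∑ κ(n)/βⁿ` pointwise since `Bₙ` is finite and each indicator in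
`φ` is at most `β⁻ⁿ`; the content is that `∑ κ(n)/βⁿ` converges.

For `w ∈ Bₙ`, `Tⁿ` maps `Δ(w) = [l, l + r/βⁿ)` affinely onto `[0, r)`, where
`r = r(w) = βⁿ λ(Δ(w))` lies in `(0, a₁)`. The children of `w` in `B_{n+1}` are: at most the digit
`0`, with remainder `β r`, if `β r ≤ a₁`; otherwise at most `a₁` and `a₂`, with remainders adding up
to `β r - a₁`. So the potential `Φ(n) = ∑_{w ∈ Bₙ} (a₁ + r(w))/βⁿ` satisfies
`Φ(n+1) + c κ(n+1)/β^(n+1) ≤ Φ(n)` for `n ≥ 1`, with `c = a₁(β-1)/2`; telescoping gives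
`c ∑_{n ≥ 2} κ(n)/βⁿ ≤ Φ(1)`.
-/

lemma summable_of_add_mul_le {t P : ℕ → ℝ} {c : ℝ} (hc : 0 < c) (ht : ∀ n, 0 ≤ t n)
    (hP : ∀ n, 0 ≤ P n) (hstep : ∀ n, P (n + 1) + c * t n ≤ P n) : Summable t := by
  have hsum (N : ℕ) : c * ∑ n ∈ Finset.range N, t n + P N ≤ P 0 := by
    induction N with
    | zero => simp
    | succ N ih =>
      rw [Finset.sum_range_succ, mul_add]
      linarith [hstep N]
  refine summable_of_sum_range_le (c := P 0 / c) ht fun N => ?_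
  rw [le_div_iff₀ hc, mul_comm]
  linarith [hsum N, hP N]

lemma tsum_le_ncard_mul {α : Type*} {p : α → Prop} (hp : {a | p a}.Finite)
    {f : {a // p a} → ℝ} {C : ℝ} (hf : ∀ i, f i ≤ C) : ∑' i, f i ≤ {a | p a}.ncard * C := by
  have : Finite {a // p a} := hp.to_subtype
  calc ∑' i, f i ≤ ∑' _ : {a // p a}, C := Summable.tsum_le_tsum hf .of_finite .of_finite
    _ = {a | p a}.ncard * C := by
      rw [tsum_const, nsmul_eq_mul, ← Nat.card_coe_set_eq]
      rfl

lemma Ico_inter_preimage_of_affine {f : ℝ → ℝ} {l x s p q : ℝ} (hs : 0 < s) (hp : 0 ≤ p)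
    (hf : ∀ y ∈ Ico l (l + x / s), f y = s * (y - l)) :
    Ico l (l + x / s) ∩ f ⁻¹' Ico p q = Ico (l + p / s) (l + min x q / s) := by
  have le_iff (a y : ℝ) : l + a / s ≤ y ↔ a ≤ s * (y - l) := by
    rw [← le_sub_iff_add_le', div_le_iff₀ hs, mul_comm]
  have lt_iff (a y : ℝ) : y < l + a / s ↔ s * (y - l) < a := by
    rw [← sub_lt_iff_lt_add', lt_div_iff₀ hs, mul_comm]
  ext y
  simp only [mem_inter_iff, mem_preimage, mem_Ico, le_iff, lt_iff, lt_min_iff]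
  constructor
  · rintro ⟨⟨hl, hx⟩, hpy, hqy⟩
    rw [hf y ⟨hl, (lt_iff x y).2 hx⟩] at hpy hqy
    exact ⟨hpy, hx, hqy⟩
  · rintro ⟨hpy, hx, hqy⟩
    have hl : l ≤ y := by
      have := (le_iff 0 y).2 (hp.trans hpy)
      rwa [zero_div, add_zero] at this
    rw [hf y ⟨hl, (lt_iff x y).2 hx⟩]
    exact ⟨⟨hl, hx⟩, hpy, hqy⟩

structure Admissible (β a₁ a₂ : ℝ) : Prop where
  one_lt : 1 < β
  pos : 0 < a₁
  lt : a₁ < a₂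
  le_two_mul : a₂ ≤ 2 * a₁
  sub_one_mul_le : (β - 1) * a₁ ≤ a₂

lemma Admissible.of_condition6 {β a₁ a₂ : ℝ} (hβ : 1 < β) (ha₁ : 0 < a₁) (h12 : a₁ < a₂)
    (hc : condition6 β a₁ a₂) : Admissible β a₁ a₂ where
  one_lt := hβ
  pos := ha₁
  lt := h12
  le_two_mul := by nlinarith [hc.2, min_le_left 2 β]
  sub_one_mul_le := by nlinarith [hc.1, le_max_left (β - 1) 1]

/-- `β` times the right endpoint of `Δ(b)`. -/
noncomputable def digitBound (β a₁ a₂ b : ℝ) : ℝ :=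
  if b = 0 then a₁ else if b = a₁ then a₂ else β * a₁

section Digits

variable {β a₁ a₂ b : ℝ}

lemma digitBound_zero : digitBound β a₁ a₂ 0 = a₁ := if_pos rfl

lemma digitBound_a₁ (ha₁ : a₁ ≠ 0) : digitBound β a₁ a₂ a₁ = a₂ := by
  simp [digitBound, ha₁]

lemma digitBound_a₂ (ha₂ : a₂ ≠ 0) (h : a₂ ≠ a₁) : digitBound β a₁ a₂ a₂ = β * a₁ := by
  simp [digitBound, ha₂, h]

lemma Admissible.digitInt_eq_Ico (hA : Admissible β a₁ a₂) (hb : b = 0 ∨ b = a₁ ∨ b = a₂) :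
    digitInt β a₁ a₂ b = Ico (b / β) (digitBound β a₁ a₂ b / β) := by
  have hβ : β ≠ 0 := by linarith [hA.one_lt]
  rcases hb with rfl | rfl | rfl
  · simp [digitInt, digitBound]
  · simp [digitInt, digitBound, hA.pos.ne']
  · simp [digitInt, digitBound, (hA.pos.trans hA.lt).ne', hA.lt.ne', hβ]

lemma Admissible.greedyT_of_mem_digitInt (hA : Admissible β a₁ a₂)
    (hb : b = 0 ∨ b = a₁ ∨ b = a₂) {z : ℝ} (hz : z ∈ digitInt β a₁ a₂ b) :
    greedyT β a₁ a₂ z = β * z - b := by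
  have hβ : 0 < β := by linarith [hA.one_lt]
  have h12 : a₁ / β ≤ a₂ / β := by gcongr; exact hA.lt.le
  rw [hA.digitInt_eq_Ico hb, mem_Ico] at hz
  rcases hb with rfl | rfl | rfl
  · simp_all [greedyT, digitBound]
  · simp_all [greedyT, digitBound, hA.pos.ne']
  · rw [greedyT, if_neg (by linarith [hz.1]), if_neg (not_lt.2 hz.1)]

lemma Admissible.digitBound_sub_le (hA : Admissible β a₁ a₂) (hb : b = 0 ∨ b = a₁ ∨ b = a₂) :
    digitBound β a₁ a₂ b - b ≤ a₁ := by
  rcases hb with rfl | rfl | rfl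
  · rw [digitBound_zero, sub_zero]
  · rw [digitBound_a₁ hA.pos.ne']
    linarith [hA.le_two_mul]
  · rw [digitBound_a₂ (hA.pos.trans hA.lt).ne' hA.lt.ne']
    linarith [hA.sub_one_mul_le]

end Digits

section Cylinders

variable {β a₁ a₂ b : ℝ} {w : List ℝ} {l x : ℝ}

lemma cyl_singleton : cyl β a₁ a₂ [b] = digitInt β a₁ a₂ b := by
  simp [cyl]

lemma cyl_append :
    cyl β a₁ a₂ (w ++ [b]) =
      cyl β a₁ a₂ w ∩ (greedyT β a₁ a₂)^[w.length] ⁻¹' digitInt β a₁ a₂ b := by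
  unfold cyl
  rw [List.length_append, List.length_singleton, Finset.range_add_one,
    Finset.set_biInter_insert, Set.inter_comm]
  congr 1
  · refine Set.iInter₂_congr fun k hk => ?_
    rw [List.getD_append _ _ _ _ (Finset.mem_range.mp hk)]
  · rw [List.getD_append_right _ _ _ _ le_rfl]
    simp

lemma not_isFull_nil : ¬ isFull β a₁ a₂ [] := by
  simp [isFull, cyl]

/-- `x` can be negative, when `Δ(w)` is empty. -/
structure IsAffineCyl (β a₁ a₂ : ℝ) (w : List ℝ) (l x : ℝ) : Prop where
  cyl_eq : cyl β a₁ a₂ w = Ico l (l + x / β ^ w.length)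
  iterate_eq : ∀ y ∈ cyl β a₁ a₂ w, (greedyT β a₁ a₂)^[w.length] y = β ^ w.length * (y - l)

lemma Admissible.isAffineCyl_singleton (hA : Admissible β a₁ a₂)
    (hb : b = 0 ∨ b = a₁ ∨ b = a₂) :
    IsAffineCyl β a₁ a₂ [b] (b / β) (digitBound β a₁ a₂ b - b) := by
  have hβ : β ≠ 0 := by linarith [hA.one_lt]
  constructor
  · rw [cyl_singleton, hA.digitInt_eq_Ico hb]
    congr 1
    simp only [List.length_singleton, pow_one]
    field_simp
    ring
  · intro y hy
    rw [cyl_singleton] at hy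
    simp only [List.length_singleton, Function.iterate_one, pow_one,
      hA.greedyT_of_mem_digitInt hb hy]
    field_simp

lemma IsAffineCyl.append (hA : Admissible β a₁ a₂) (h : IsAffineCyl β a₁ a₂ w l x) (hb : b = 0 ∨ b = a₁ ∨ b = a₂) :
    IsAffineCyl β a₁ a₂ (w ++ [b]) (l + b / β ^ (w.length + 1))
      (min (β * x) (digitBound β a₁ a₂ b) - b) := by
  have hβ : 0 < β := by linarith [hA.one_lt]
  have hs : 0 < β ^ w.length := pow_pos hβ _
  have hp : 0 ≤ b / β := by
    refine div_nonneg ?_ hβ.le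
    rcases hb with rfl | rfl | rfl <;> linarith [hA.pos, hA.lt]
  have hf : ∀ y ∈ Ico l (l + x / β ^ w.length),
      (greedyT β a₁ a₂)^[w.length] y = β ^ w.length * (y - l) := h.cyl_eq ▸ h.iterate_eq
  constructor
  · have hmin : min x (digitBound β a₁ a₂ b / β) = min (β * x) (digitBound β a₁ a₂ b) / β := by
      rw [← min_div_div_right hβ.le, mul_div_cancel_left₀ _ hβ.ne']
    rw [cyl_append, h.cyl_eq, hA.digitInt_eq_Ico hb, Ico_inter_preimage_of_affine hs hp hf, hmin,
      List.length_append, List.length_singleton]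
    congr 1 <;> field_simp <;> ring
  · intro y hy
    rw [cyl_append] at hy
    rw [List.length_append, List.length_singleton, Function.iterate_succ_apply',
      hA.greedyT_of_mem_digitInt hb hy.2, h.iterate_eq y hy.1]
    field_simp
    ring

lemma Admissible.exists_isAffineCyl (hA : Admissible β a₁ a₂)
    (hw : isWord a₁ a₂ w) (hne : w ≠ []) : ∃ l x, x ≤ a₁ ∧ IsAffineCyl β a₁ a₂ w l x := by
  induction w using List.reverseRecOn with
  | nil => exact absurd rfl hne
  | append_singleton u b ih =>
    have hb := hw b (by simp)
    rcases eq_or_ne u [] with rfl | hu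
    · exact ⟨_, _, hA.digitBound_sub_le hb, hA.isAffineCyl_singleton hb⟩
    · obtain ⟨l, x, -, h⟩ := ih (fun c hc => hw c (by simp [hc])) hu
      refine ⟨_, _, ?_, h.append hA hb⟩
      linarith [min_le_right (β * x) (digitBound β a₁ a₂ b), hA.digitBound_sub_le hb]

namespace IsAffineCyl

lemma volume_eq (h : IsAffineCyl β a₁ a₂ w l x) :
    volume (cyl β a₁ a₂ w) = ENNReal.ofReal (x / β ^ w.length) := by
  rw [h.cyl_eq, Real.volume_Ico, add_sub_cancel_left]

lemma pos_and_ne_of_memB (h : IsAffineCyl β a₁ a₂ w l x) (hβ : 0 < β) {n : ℕ}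
    (hw : memB β a₁ a₂ n w) : 0 < x ∧ x ≠ a₁ := by
  obtain ⟨-, -, hpos, hnf, -⟩ := hw
  rw [h.volume_eq, ENNReal.ofReal_pos] at hpos
  exact ⟨(div_pos_iff_of_pos_right (pow_pos hβ _)).1 hpos,
    fun hx => hnf (hx ▸ h.volume_eq)⟩

end IsAffineCyl

noncomputable def scaledLength (β a₁ a₂ : ℝ) (w : List ℝ) : ℝ :=
  β ^ w.length * (volume (cyl β a₁ a₂ w)).toReal

lemma scaledLength_nonneg (hβ : 0 ≤ β) (w : List ℝ) : 0 ≤ scaledLength β a₁ a₂ w := by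
  unfold scaledLength; positivity

lemma IsAffineCyl.scaledLength_eq (h : IsAffineCyl β a₁ a₂ w l x)
    (hβ : 0 < β) : scaledLength β a₁ a₂ w = max x 0 := by
  rw [scaledLength, h.volume_eq, ENNReal.toReal_ofReal', mul_max_of_nonneg _ _ (by positivity),
    mul_div_cancel₀ _ (pow_pos hβ _).ne', mul_zero]

end Cylinders

section Words

variable {β a₁ a₂ : ℝ} {n : ℕ} {w : List ℝ}

lemma memB.ne_nil (hw : memB β a₁ a₂ n w) (hn : n ≠ 0) : w ≠ [] := by
  rintro rfl
  exact hn hw.1.symm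

lemma memB.dropLast (hw : memB β a₁ a₂ (n + 1) w) : memB β a₁ a₂ n w.dropLast := by
  have hne := hw.ne_nil n.succ_ne_zero
  obtain ⟨hlen, hword, hpos, -, hpre⟩ := hw
  have hsub : cyl β a₁ a₂ w ⊆ cyl β a₁ a₂ w.dropLast := by
    conv_lhs => rw [← List.dropLast_append_getLast hne]
    rw [cyl_append]
    exact inter_subset_left
  have hproper : ∀ w', w' <+: w.dropLast → w' ≠ w := fun w' hw' e => by
    have := hw'.length_le
    rw [e, List.length_dropLast] at this
    omega
  refine ⟨by simp [hlen], fun b hb => hword b (List.dropLast_subset _ hb),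
    hpos.trans_le (measure_mono hsub), ?_,
    fun w' hne' hw' _ => hpre w' hne' (hw'.trans w.dropLast_prefix) (hproper w' hw')⟩
  rcases eq_or_ne w.dropLast [] with h0 | h0
  · rw [h0]
    exact not_isFull_nil
  · exact hpre _ h0 w.dropLast_prefix (hproper _ List.prefix_rfl)

lemma finite_setOf_memB (β a₁ a₂ : ℝ) (n : ℕ) : {w | memB β a₁ a₂ n w}.Finite := by
  refine ((List.finite_length_eq ({0, a₁, a₂} : Set ℝ) n).image (List.map (↑))).subset ?_
  rintro w ⟨hlen, hword, -⟩
  have hmem : ∀ b ∈ w, b ∈ ({0, a₁, a₂} : Set ℝ) := hword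
  exact ⟨w.attachWith _ hmem, by simp [hlen], List.attachWith_map_subtype_val hmem⟩

noncomputable def finsetB (β a₁ a₂ : ℝ) (n : ℕ) : Finset (List ℝ) :=
  (finite_setOf_memB β a₁ a₂ n).toFinset

open Classical in
noncomputable def children (β a₁ a₂ : ℝ) (n : ℕ) (w : List ℝ) : Finset ℝ :=
  ({0, a₁, a₂} : Finset ℝ).filter fun b => memB β a₁ a₂ (n + 1) (w ++ [b])

lemma mem_finsetB : w ∈ finsetB β a₁ a₂ n ↔ memB β a₁ a₂ n w :=
  Set.Finite.mem_toFinset _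

lemma kappa_eq_card : kappa β a₁ a₂ n = (finsetB β a₁ a₂ n).card :=
  Set.ncard_eq_toFinset_card _ _

lemma sum_finsetB_succ (f : List ℝ → ℝ) :
    ∑ v ∈ finsetB β a₁ a₂ (n + 1), f v =
      ∑ w ∈ finsetB β a₁ a₂ n, ∑ b ∈ children β a₁ a₂ n w, f (w ++ [b]) := by
  classical
  rw [← Finset.sum_fiberwise_of_maps_to (g := List.dropLast)
    fun v hv => mem_finsetB.2 (mem_finsetB.1 hv).dropLast]
  refine Finset.sum_congr rfl fun w _ => ?_
  rw [← Finset.sum_image (g := fun b => w ++ [b]) fun b _ b' _ e => by simpa using e]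
  refine Finset.sum_congr (Finset.ext fun v => ?_) fun _ _ => rfl
  simp only [Finset.mem_filter, Finset.mem_image, children, mem_finsetB]
  constructor
  · rintro ⟨hv, rfl⟩
    have hne := hv.ne_nil n.succ_ne_zero
    refine ⟨v.getLast hne, ⟨?_, ?_⟩, List.dropLast_append_getLast hne⟩
    · simpa using hv.2.1 _ (List.getLast_mem hne)
    · rwa [List.dropLast_append_getLast hne]
  · rintro ⟨b, ⟨-, hb⟩, rfl⟩
    exact ⟨hb, List.dropLast_concat⟩

end Words

section Potential

variable {β a₁ a₂ b : ℝ} {n : ℕ} {w : List ℝ} {l x : ℝ}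

namespace IsAffineCyl

lemma remainder_of_mem_children (hA : Admissible β a₁ a₂) (h : IsAffineCyl β a₁ a₂ w l x)
    (hb : b ∈ children β a₁ a₂ n w) :
    (b = 0 ∨ b = a₁ ∨ b = a₂) ∧ 0 < min (β * x) (digitBound β a₁ a₂ b) - b ∧
      min (β * x) (digitBound β a₁ a₂ b) - b ≠ a₁ := by
  simp only [children, Finset.mem_filter, Finset.mem_insert, Finset.mem_singleton] at hb
  exact ⟨hb.1, (h.append hA hb.1).pos_and_ne_of_memB (by linarith [hA.one_lt]) hb.2⟩

lemma children_subset_zero (hA : Admissible β a₁ a₂) (h : IsAffineCyl β a₁ a₂ w l x)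
    (hx : β * x ≤ a₁) : children β a₁ a₂ n w ⊆ {0} := by
  intro b hb
  obtain ⟨hb, hpos, -⟩ := h.remainder_of_mem_children hA hb
  rcases hb with rfl | rfl | rfl
  · exact Finset.mem_singleton_self _
  · rw [digitBound_a₁ hA.pos.ne'] at hpos
    linarith [min_le_left (β * x) a₂]
  · rw [digitBound_a₂ (hA.pos.trans hA.lt).ne' hA.lt.ne'] at hpos
    linarith [min_le_left (β * x) (β * a₁), hA.lt]

lemma children_subset_pair (hA : Admissible β a₁ a₂) (h : IsAffineCyl β a₁ a₂ w l x)
    (hx : a₁ < β * x) : children β a₁ a₂ n w ⊆ {a₁, a₂} := by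
  intro b hb
  obtain ⟨hb, -, hne⟩ := h.remainder_of_mem_children hA hb
  rcases hb with rfl | rfl | rfl
  · rw [digitBound_zero, min_eq_right hx.le, sub_zero] at hne
    exact absurd rfl hne
  · simp
  · simp

end IsAffineCyl

lemma Admissible.sum_children_le (hA : Admissible β a₁ a₂) (hw : memB β a₁ a₂ n w)
    (hn : n ≠ 0) :
    ∑ b ∈ children β a₁ a₂ n w, (a₁ + a₁ * (β - 1) / 2 + scaledLength β a₁ a₂ (w ++ [b]))
      ≤ β * (a₁ + scaledLength β a₁ a₂ w) := by
  have hβ : 0 < β := by linarith [hA.one_lt]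
  obtain ⟨l, x, hxa, h⟩ := hA.exists_isAffineCyl hw.2.1 (hw.ne_nil hn)
  have hx0 := (h.pos_and_ne_of_memB hβ hw).1
  have hlen (b : ℝ) (hb : b = 0 ∨ b = a₁ ∨ b = a₂) : scaledLength β a₁ a₂ (w ++ [b]) =
      max (min (β * x) (digitBound β a₁ a₂ b) - b) 0 := (h.append hA hb).scaledLength_eq hβ
  have hnonneg (b : ℝ) : 0 ≤ a₁ + a₁ * (β - 1) / 2 + scaledLength β a₁ a₂ (w ++ [b]) := by
    have := scaledLength_nonneg hβ.le (a₁ := a₁) (a₂ := a₂) (w ++ [b])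
    nlinarith [hA.pos, hA.one_lt]
  rw [h.scaledLength_eq hβ, max_eq_left hx0.le]
  rcases le_or_gt (β * x) a₁ with hy | hy
  · calc _ ≤ ∑ b ∈ {0}, (a₁ + a₁ * (β - 1) / 2 + scaledLength β a₁ a₂ (w ++ [b])) :=
          Finset.sum_le_sum_of_subset_of_nonneg (h.children_subset_zero hA hy)
            fun b _ _ => hnonneg b
      _ ≤ β * (a₁ + x) := by
        rw [Finset.sum_singleton, hlen 0 (Or.inl rfl), digitBound_zero, sub_zero,
          max_eq_left (le_min (by positivity) hA.pos.le)]
        nlinarith [min_le_left (β * x) a₁, hA.pos, hA.one_lt]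
  · have hrest : max (min (β * x) a₂ - a₁) 0 + max (β * x - a₂) 0 = β * x - a₁ := by
      rcases le_total (β * x) a₂ with h2 | h2
      · rw [min_eq_left h2, max_eq_left (by linarith), max_eq_right (by linarith)]
        ring
      · rw [min_eq_right h2, max_eq_left (by linarith [hA.lt]), max_eq_left (by linarith)]
        ring
    calc _ ≤ ∑ b ∈ {a₁, a₂}, (a₁ + a₁ * (β - 1) / 2 + scaledLength β a₁ a₂ (w ++ [b])) :=
          Finset.sum_le_sum_of_subset_of_nonneg (h.children_subset_pair hA hy)
            fun b _ _ => hnonneg b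
      _ = β * (a₁ + x) := by
        rw [Finset.sum_pair hA.lt.ne, hlen a₁ (Or.inr (Or.inl rfl)),
          hlen a₂ (Or.inr (Or.inr rfl)), digitBound_a₁ hA.pos.ne',
          digitBound_a₂ (hA.pos.trans hA.lt).ne' hA.lt.ne',
          min_eq_left (mul_le_mul_of_nonneg_left hxa hβ.le)]
        linarith

noncomputable def potential (β a₁ a₂ : ℝ) (n : ℕ) : ℝ :=
  ∑ w ∈ finsetB β a₁ a₂ n, (a₁ + scaledLength β a₁ a₂ w) / β ^ n

lemma Admissible.potential_nonneg (hA : Admissible β a₁ a₂) (n : ℕ) :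
    0 ≤ potential β a₁ a₂ n := by
  have hβ : 0 < β := by linarith [hA.one_lt]
  exact Finset.sum_nonneg fun w _ =>
    div_nonneg (add_nonneg hA.pos.le (scaledLength_nonneg hβ.le w)) (pow_pos hβ n).le

lemma Admissible.potential_succ_add_le (hA : Admissible β a₁ a₂) (hn : n ≠ 0) :
    potential β a₁ a₂ (n + 1) + a₁ * (β - 1) / 2 * (kappa β a₁ a₂ (n + 1) / β ^ (n + 1))
      ≤ potential β a₁ a₂ n := by
  have hβ : 0 < β := by linarith [hA.one_lt]
  calc _ = (∑ v ∈ finsetB β a₁ a₂ (n + 1), (a₁ + a₁ * (β - 1) / 2 + scaledLength β a₁ a₂ v))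
        / β ^ (n + 1) := by
        rw [potential, kappa_eq_card, ← Finset.sum_div]
        simp only [Finset.sum_add_distrib, Finset.sum_const, nsmul_eq_mul]
        ring
    _ = (∑ w ∈ finsetB β a₁ a₂ n, ∑ b ∈ children β a₁ a₂ n w,
          (a₁ + a₁ * (β - 1) / 2 + scaledLength β a₁ a₂ (w ++ [b]))) / β ^ (n + 1) := by
        rw [sum_finsetB_succ]
    _ ≤ (∑ w ∈ finsetB β a₁ a₂ n, β * (a₁ + scaledLength β a₁ a₂ w)) / β ^ (n + 1) := by
        gcongr with w hw
        exact hA.sum_children_le (mem_finsetB.1 hw) hn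
    _ = potential β a₁ a₂ n := by
        rw [potential, ← Finset.sum_div, ← Finset.mul_sum, pow_succ]
        field_simp

end Potential

section Density

variable {β a₁ a₂ : ℝ}

lemma Admissible.summable_kappa_div_pow (hA : Admissible β a₁ a₂) :
    Summable fun n : ℕ => (kappa β a₁ a₂ (n + 1) : ℝ) / β ^ (n + 1) := by
  have hβ : 0 < β := by linarith [hA.one_lt]
  exact (summable_nat_add_iff 1).1 <|
    summable_of_add_mul_le (P := fun n => potential β a₁ a₂ (n + 1))
      (div_pos (mul_pos hA.pos (sub_pos.2 hA.one_lt)) two_pos) (fun n => by positivity)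
      (fun n => hA.potential_nonneg _) fun n => hA.potential_succ_add_le n.succ_ne_zero

lemma one_le_phi (hβ : 0 ≤ β) (x : ℝ) : 1 ≤ phi β a₁ a₂ x :=
  le_add_of_nonneg_right <| tsum_nonneg fun _ => tsum_nonneg fun _ =>
    indicator_nonneg (fun _ _ => inv_nonneg.2 (pow_nonneg hβ _)) x

lemma Admissible.phi_le (hA : Admissible β a₁ a₂) (x : ℝ) :
    phi β a₁ a₂ x ≤ 1 + ∑' n : ℕ, (kappa β a₁ a₂ (n + 1) : ℝ) / β ^ (n + 1) := by
  have hβ : 0 ≤ β := by linarith [hA.one_lt]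
  let g (n : ℕ) : ℝ := ∑' w : {w : List ℝ // memB β a₁ a₂ (n + 1) w},
    indicator ((greedyT β a₁ a₂)^[n + 1] '' cyl β a₁ a₂ w.1) (fun _ => (β ^ (n + 1))⁻¹) x
  have hg_nonneg (n : ℕ) : 0 ≤ g n := tsum_nonneg fun _ =>
    indicator_nonneg (fun _ _ => inv_nonneg.2 (pow_nonneg hβ _)) x
  have hg_le (n : ℕ) : g n ≤ (kappa β a₁ a₂ (n + 1) : ℝ) / β ^ (n + 1) := by
    rw [kappa, div_eq_mul_inv]
    exact tsum_le_ncard_mul (finite_setOf_memB β a₁ a₂ (n + 1)) fun _ =>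
      indicator_apply_le' (fun _ => le_rfl) fun _ => inv_nonneg.2 (pow_nonneg hβ _)
  have hsum := hA.summable_kappa_div_pow
  exact (add_le_add_iff_left 1).2
    (Summable.tsum_le_tsum hg_le (hsum.of_nonneg_of_le hg_nonneg hg_le) hsum)

end Density

theorem stmt13_general (β a₁ a₂ : ℝ) (hβ1 : 1 < β)
    (ha₁ : 0 < a₁) (h12 : a₁ < a₂) (hc : condition6 β a₁ a₂) :
    ∀ E : Set ℝ, E ⊆ Set.Ico 0 a₁ → MeasurableSet E →
      volume E ≤ muMeas β a₁ a₂ E ∧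
      muMeas β a₁ a₂ E ≤
        ENNReal.ofReal (1 + ∑' n : ℕ, (kappa β a₁ a₂ (n + 1) : ℝ) / β ^ (n + 1))
          * volume E := by
  intro E hE hmeas
  have hA := Admissible.of_condition6 hβ1 ha₁ h12 hc
  have hμ : muMeas β a₁ a₂ E = ∫⁻ x in E, ENNReal.ofReal (phi β a₁ a₂ x) := by
    rw [muMeas, withDensity_apply _ hmeas, Measure.restrict_restrict hmeas,
      inter_eq_self_of_subset_left hE]
  rw [hμ]
  constructor
  · calc volume E = ∫⁻ _ in E, 1 := (setLIntegral_one E).symm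
      _ ≤ _ := lintegral_mono fun x => ENNReal.one_le_ofReal.2 (one_le_phi (by linarith) x)
  · calc _ ≤ ∫⁻ _ in E, ENNReal.ofReal (1 + ∑' n : ℕ, (kappa β a₁ a₂ (n + 1) : ℝ) / β ^ (n + 1)) :=
          lintegral_mono fun x => ENNReal.ofReal_le_ofReal (hA.phi_le x)
      _ = _ := setLIntegral_const _ _

/-- For every Borel set `E ⊆ [0, a₁)` one has
`λ(E) ≤ μ(E) ≤ c₂·λ(E)`, where `c₂ = 1 + Σ_{n≥1} κ(n)/βⁿ` (a finite constant). -/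
theorem stmt13 (β a₁ a₂ : ℝ) (hβ1 : 1 < β) (hβ3 : β < 3)
    (ha₁ : 0 < a₁) (h12 : a₁ < a₂) (hc : condition6 β a₁ a₂) :
    ∀ E : Set ℝ, E ⊆ Set.Ico 0 a₁ → MeasurableSet E →
      volume E ≤ muMeas β a₁ a₂ E ∧
      muMeas β a₁ a₂ E ≤
        ENNReal.ofReal (1 + ∑' n : ℕ, (kappa β a₁ a₂ (n + 1) : ℝ) / β ^ (n + 1))
          * volume E :=
  stmt13_general β a₁ a₂ hβ1 ha₁ h12 hc
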